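/- For the Clayton copula with θ > 0 and α ∈ (0,1), the lower-tail joint risk R_L(θ) = C_θ(α,α) = (2α^{-θ} - 1)^{-1/θ} is strictly increasing in θ and satisfies α² < R_L(θ) < α for all θ > 0. -/

import Mathlib

open Real Set

/-!
Put `u = -θ log α > 0` and `φ u = log (2 eᵘ - 1)`. Then `log C_θ(α, α) = log α · φ u / u`.
Since `φ` is strictly concave on `[0, ∞)` with `φ 0 = 0`, the secant slope `φ u / u` strictly
decreases in `u`, hence in `θ`; and `u < φ u < 2u` turns into `α² < C_θ(α, α) < α`.
-/

lemma hasDerivAt_log_two_mul_exp_sub_one {u : ℝ} (hu : 0 ≤ u) :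
    HasDerivAt (fun u => log (2 * exp u - 1)) (1 + (2 * exp u - 1)⁻¹) u := by
  have hpos : 0 < 2 * exp u - 1 := by linarith [one_le_exp hu]
  convert ((hasDerivAt_exp u).const_mul 2 |>.sub_const 1).log hpos.ne' using 1
  field_simp
  ring

lemma strictConcaveOn_log_two_mul_exp_sub_one :
    StrictConcaveOn ℝ (Ici 0) (fun u => log (2 * exp u - 1)) := by
  refine StrictAntiOn.strictConcaveOn_of_deriv (convex_Ici 0) ?_ ?_
  · refine ContinuousOn.log (by fun_prop) fun u (hu : 0 ≤ u) => ?_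
    linarith [one_le_exp hu]
  · rw [interior_Ici]
    intro u (hu : 0 < u) v (hv : 0 < v) huv
    rw [(hasDerivAt_log_two_mul_exp_sub_one hu.le).deriv,
      (hasDerivAt_log_two_mul_exp_sub_one hv.le).deriv]
    have : 0 < 2 * exp u - 1 := by linarith [one_lt_exp_iff.2 hu]
    gcongr

lemma strictAntiOn_log_two_mul_exp_sub_one_div :
    StrictAntiOn (fun u => log (2 * exp u - 1) / u) (Ioi 0) := by
  intro u (hu : 0 < u) v (hv : 0 < v) huv
  have h := strictConcaveOn_log_two_mul_exp_sub_one.secant_strict_mono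
    (mem_Ici.2 le_rfl) (mem_Ici.2 hu.le) (mem_Ici.2 hv.le) hu.ne' hv.ne' huv
  norm_num at h
  exact h

lemma lt_log_two_mul_exp_sub_one {u : ℝ} (hu : 0 < u) : u < log (2 * exp u - 1) := by
  rw [lt_log_iff_exp_lt (by linarith [one_lt_exp_iff.2 hu])]
  linarith [one_lt_exp_iff.2 hu]

lemma log_two_mul_exp_sub_one_lt {u : ℝ} (hu : 0 < u) : log (2 * exp u - 1) < 2 * u := by
  rw [log_lt_iff_lt_exp (by linarith [one_lt_exp_iff.2 hu]), two_mul u, exp_add]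
  nlinarith [pow_pos (sub_pos.2 (one_lt_exp_iff.2 hu)) 2]

lemma clayton_diag_eq_exp {α θ : ℝ} (hα : α ∈ Ioo (0 : ℝ) 1) (hθ : 0 < θ) :
    (2 * α ^ (-θ) - 1) ^ (-1 / θ) =
      exp (log α * (log (2 * exp (log α * -θ) - 1) / (log α * -θ))) := by
  have hlog : log α < 0 := log_neg hα.1 hα.2
  have hbase : 0 < 2 * exp (log α * -θ) - 1 := by
    linarith [one_lt_exp_iff.2 (mul_pos_of_neg_of_neg hlog (neg_neg_of_pos hθ))]
  rw [rpow_def_of_pos hα.1, rpow_def_of_pos hbase]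
  congr 1
  field_simp [hlog.ne]

/-- Clayton lower-tail joint risk R_L(θ) = (2α^{-θ}-1)^{-1/θ} is strictly
increasing in θ and lies strictly between α² and α. -/
theorem clayton_lower_tail_risk (α : ℝ) (hα : α ∈ Ioo (0:ℝ) 1) :
    StrictMonoOn (fun θ : ℝ => (2 * α ^ (-θ) - 1) ^ (-1 / θ)) (Ioi 0) ∧
    ∀ θ : ℝ, 0 < θ →
      α ^ 2 < (2 * α ^ (-θ) - 1) ^ (-1 / θ) ∧
      (2 * α ^ (-θ) - 1) ^ (-1 / θ) < α := by
  have hlog : log α < 0 := log_neg hα.1 hα.2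
  have hu : ∀ θ : ℝ, 0 < θ → 0 < log α * -θ := fun θ hθ =>
    mul_pos_of_neg_of_neg hlog (neg_neg_of_pos hθ)
  refine ⟨fun θ (hθ : 0 < θ) θ' (hθ' : 0 < θ') hlt => ?_, fun θ hθ => ?_⟩
  · simp only [clayton_diag_eq_exp hα hθ, clayton_diag_eq_exp hα hθ', exp_lt_exp]
    exact mul_lt_mul_of_neg_left (strictAntiOn_log_two_mul_exp_sub_one_div (hu θ hθ) (hu θ' hθ')
      (mul_lt_mul_of_neg_left (neg_lt_neg hlt) hlog)) hlog
  · have hq₁ := (one_lt_div (hu θ hθ)).2 (lt_log_two_mul_exp_sub_one (hu θ hθ))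
    have hq₂ := (div_lt_iff₀ (hu θ hθ)).2 (log_two_mul_exp_sub_one_lt (hu θ hθ))
    rw [clayton_diag_eq_exp hα hθ, ← log_lt_iff_lt_exp (pow_pos hα.1 2),
      ← lt_log_iff_exp_lt hα.1, log_pow, Nat.cast_ofNat, mul_comm 2]
    exact ⟨mul_lt_mul_of_neg_left hq₂ hlog, by simpa using mul_lt_mul_of_neg_left hq₁ hlog⟩
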